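/- arXiv:2409.00500 — 4 statements merged into one kernel-verified Lean document; each statement's English description precedes it below -/
import Mathlib

section
/- Let 𝒜 be a commuting family with a semisimple joint eigenvalue 𝛌 = (λ₁,…,λ_d) of multiplicity p. Then there exist invertible matrices X = [X₁ X₂] and Y = [Y₁ Y₂] in ℂ^{n×n} with X₁*X₁ = I_p, Y*X = Iₙ, and Y*AₖX = diag(λₖI_p, A₂₂^{(k)}) for each k = 1,…,d, for some A₂₂^{(k)} ∈ ℂ^{(n−p)×(n−p)}. -/
/-!
Write `N(χ)` for the joint generalized eigenspace `⋂ₖ ker (Aₖ - χₖ)^∞`. Splitting off the first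
basis vector of a triangular family shows that `dim N(χ)` is at most the number of diagonal
positions carrying `χ`; for `χ = 𝛌` this is `p`, and `N(𝛌)` contains the joint eigenspace, of
dimension `p`, so the two coincide. For a commuting family the `N(χ)` are independent and span
the space, so `N(𝛌)` has the invariant complement `⨆_{χ ≠ 𝛌} N(χ)`. Taking `X` to be an
orthonormal basis of `N(𝛌)` followed by a basis of that complement, and `Y = X⁻ᴴ`, works.
-/

open Matrix Module Module.End

namespace Module.End

abbrev jointGenEigenspace {ι R M : Type*} [CommRing R] [AddCommGroup M] [Module R M]
    (f : ι → End R M) (χ : ι → R) : Submodule R M :=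
  ⨅ k, (f k).maxGenEigenspace (χ k)

variable {ι R M M₂ : Type*} [CommRing R] [AddCommGroup M] [Module R M]
  [AddCommGroup M₂] [Module R M₂]

lemma map_maxGenEigenspace_le {f : End R M} {f₂ : End R M₂} {g : M →ₗ[R] M₂}
    (h : g ∘ₗ f = f₂ ∘ₗ g) (μ : R) :
    (f.maxGenEigenspace μ).map g ≤ f₂.maxGenEigenspace μ := by
  rintro _ ⟨x, hx, rfl⟩
  obtain ⟨k, hk⟩ := (mem_maxGenEigenspace f μ x).1 hx
  have hsub : (f₂ - μ • 1) ∘ₗ g = g ∘ₗ (f - μ • 1) := by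
    rw [LinearMap.sub_comp, LinearMap.comp_sub, h, LinearMap.smul_comp, LinearMap.comp_smul,
      one_eq_id, LinearMap.id_comp, one_eq_id, LinearMap.comp_id]
  refine (mem_maxGenEigenspace f₂ μ _).2 ⟨k, ?_⟩
  rw [← LinearMap.comp_apply, commute_pow_left_of_commute hsub, LinearMap.comp_apply,
    hk, map_zero]

lemma map_jointGenEigenspace_le {f : ι → End R M} {f₂ : ι → End R M₂} {g : M →ₗ[R] M₂}
    (h : ∀ k, g ∘ₗ f k = f₂ k ∘ₗ g) (χ : ι → R) :
    (jointGenEigenspace f χ).map g ≤ jointGenEigenspace f₂ χ :=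
  le_iInf fun k => (Submodule.map_mono (iInf_le _ k)).trans (map_maxGenEigenspace_le (h k) _)

lemma map_jointGenEigenspace_le_of_commute {f : ι → End R M} (hf : ∀ j k, Commute (f j) (f k))
    (k : ι) (χ : ι → R) :
    (jointGenEigenspace f χ).map (f k) ≤ jointGenEigenspace f χ :=
  map_jointGenEigenspace_le (fun j => (hf k j).eq) χ

lemma map_iSup_jointGenEigenspace_ne_le {f : ι → End R M} (hf : ∀ j k, Commute (f j) (f k))
    (k : ι) (χ : ι → R) :
    (⨆ (χ' : ι → R) (_ : χ' ≠ χ), jointGenEigenspace f χ').map (f k) ≤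
      ⨆ (χ' : ι → R) (_ : χ' ≠ χ), jointGenEigenspace f χ' := by
  simp only [Submodule.map_iSup]
  exact iSup₂_mono fun χ' _ => map_jointGenEigenspace_le_of_commute hf k χ'

lemma finrank_jointGenEigenspace_le_of_injective {K V V₂ : Type*} [Field K] [AddCommGroup V]
    [Module K V] [AddCommGroup V₂] [Module K V₂] [FiniteDimensional K V₂] {f : ι → End K V}
    {f₂ : ι → End K V₂} {g : V →ₗ[K] V₂} (hg : Function.Injective g)
    (h : ∀ k, g ∘ₗ f k = f₂ k ∘ₗ g) (χ : ι → K) :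
    finrank K (jointGenEigenspace f χ) ≤ finrank K (jointGenEigenspace f₂ χ) :=
  (Submodule.equivMapOfInjective g hg _).finrank_eq.le.trans
    (Submodule.finrank_mono (map_jointGenEigenspace_le h χ))

variable {K V : Type*} [Field K] [IsAlgClosed K] [AddCommGroup V] [Module K V]
  [FiniteDimensional K V]

lemma isCompl_jointGenEigenspace_iSup_ne {f : ι → End K V} (hf : ∀ j k, Commute (f j) (f k))
    (χ : ι → K) :
    IsCompl (jointGenEigenspace f χ) (⨆ (χ' : ι → K) (_ : χ' ≠ χ), jointGenEigenspace f χ') := by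
  refine ⟨independent_iInf_maxGenEigenspace_of_forall_mapsTo f
    (fun i j φ => mapsTo_maxGenEigenspace_of_comm (hf j i) φ) χ, codisjoint_iff.2 ?_⟩
  rw [← iSup_split_single]
  exact iSup_iInf_maxGenEigenspace_eq_top_of_iSup_maxGenEigenspace_eq_top_of_commute f
    (fun i j _ => hf i j) fun k => iSup_maxGenEigenspace_eq_top _

end Module.End

lemma Submodule.finrank_map_add_finrank_inf_ker {K V V₂ : Type*} [Field K] [AddCommGroup V]
    [Module K V] [FiniteDimensional K V] [AddCommGroup V₂] [Module K V₂] (p : Submodule K V)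
    (g : V →ₗ[K] V₂) :
    finrank K (p.map g) + finrank K ↥(p ⊓ LinearMap.ker g) = finrank K p := by
  rw [← (g.domRestrict p).finrank_range_add_finrank_ker, LinearMap.range_domRestrict,
    LinearMap.ker_domRestrict, ← Submodule.finrank_map_subtype_eq, Submodule.map_comap_subtype]

lemma LinearMap.finrank_ker_funLeft_succ (K : Type*) [Field K] (n : ℕ) :
    finrank K (LinearMap.ker (LinearMap.funLeft K K (Fin.succ : Fin n → Fin (n + 1)))) = 1 := by
  have h := (LinearMap.funLeft K K (Fin.succ : Fin n → Fin (n + 1))).finrank_range_add_finrank_ker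
  rw [LinearMap.range_eq_top.2 (LinearMap.funLeft_surjective_of_injective _ _ _
    (Fin.succ_injective n)), finrank_top, finrank_fin_fun, finrank_fin_fun] at h
  omega

namespace Matrix.BlockTriangular

variable {K : Type*} [Field K] {n : ℕ}

lemma funLeft_succ_comp_mulVecLin {M : Matrix (Fin (n + 1)) (Fin (n + 1)) K}
    (hM : M.BlockTriangular id) :
    LinearMap.funLeft K K Fin.succ ∘ₗ M.mulVecLin =
      (M.submatrix Fin.succ Fin.succ).mulVecLin ∘ₗ LinearMap.funLeft K K Fin.succ := by
  refine LinearMap.ext fun v => funext fun i => ?_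
  have h0 : M i.succ 0 = 0 := hM (Fin.succ_pos i)
  simp [mulVec, dotProduct, Fin.sum_univ_succ, h0]

lemma mulVec_eq_smul_of_mem_ker_funLeft_succ {M : Matrix (Fin (n + 1)) (Fin (n + 1)) K}
    (hM : M.BlockTriangular id) {v : Fin (n + 1) → K}
    (hv : v ∈ LinearMap.ker (LinearMap.funLeft K K Fin.succ)) :
    M *ᵥ v = M 0 0 • v := by
  have hv' : ∀ i : Fin n, v i.succ = 0 := fun i => congrFun hv i
  ext i
  cases i using Fin.cases with
  | zero => simp [mulVec, dotProduct, Fin.sum_univ_succ, hv']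
  | succ i =>
    have h0 : M i.succ 0 = 0 := hM (Fin.succ_pos i)
    simp [mulVec, dotProduct, Fin.sum_univ_succ, hv', h0]

variable {ι : Type*} [Fintype ι] [DecidableEq K]

lemma finrank_jointGenEigenspace_inf_ker_funLeft_succ_le
    {T : ι → Matrix (Fin (n + 1)) (Fin (n + 1)) K} (hT : ∀ k, (T k).BlockTriangular id)
    (χ : ι → K) :
    finrank K ↥(jointGenEigenspace (fun k => (T k).mulVecLin) χ ⊓
      LinearMap.ker (LinearMap.funLeft K K Fin.succ)) ≤ if ∀ k, T k 0 0 = χ k then 1 else 0 := by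
  split_ifs with hχ
  · exact (Submodule.finrank_mono inf_le_right).trans (LinearMap.finrank_ker_funLeft_succ K n).le
  · obtain ⟨k, hk⟩ := not_forall.1 hχ
    suffices h : jointGenEigenspace (fun k => (T k).mulVecLin) χ ⊓
        LinearMap.ker (LinearMap.funLeft K K Fin.succ) = ⊥ by
      rw [h, finrank_bot]
    refine (Submodule.eq_bot_iff _).2 fun v ⟨hgen, hker⟩ => ?_
    have heig : v ∈ eigenspace (T k).mulVecLin (T k 0 0) :=
      mem_eigenspace_iff.2 ((hT k).mulVec_eq_smul_of_mem_ker_funLeft_succ hker)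
    exact Submodule.disjoint_def.1 (disjoint_genEigenspace _ hk 1 ⊤) v heig
      ((Submodule.mem_iInf _).1 hgen k)

theorem finrank_jointGenEigenspace_le :
    ∀ {n : ℕ} {T : ι → Matrix (Fin n) (Fin n) K}, (∀ k, (T k).BlockTriangular id) →
      ∀ χ : ι → K, finrank K (jointGenEigenspace (fun k => (T k).mulVecLin) χ) ≤
        (Finset.univ.filter fun i => ∀ k, T k i i = χ k).card
  | 0, T, _, χ => by
    simpa using Submodule.finrank_le (jointGenEigenspace (fun k => (T k).mulVecLin) χ)
  | n + 1, T, hT, χ => by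
    have hT' : ∀ k, (T k |>.submatrix Fin.succ Fin.succ).BlockTriangular id :=
      fun k _ _ h => hT k (Fin.succ_lt_succ_iff.2 h)
    have hmap := map_jointGenEigenspace_le (fun k => (hT k).funLeft_succ_comp_mulVecLin) χ
    rw [← Submodule.finrank_map_add_finrank_inf_ker _ (LinearMap.funLeft K K Fin.succ),
      Fin.card_filter_univ_succ', add_comm (ite _ _ _)]
    exact add_le_add ((Submodule.finrank_mono hmap).trans (finrank_jointGenEigenspace_le hT' χ))
      (finrank_jointGenEigenspace_inf_ker_funLeft_succ_le hT χ)

end Matrix.BlockTriangular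

lemma Matrix.conjTranspose_mul_self_of_orthonormal {𝕜 ι κ : Type*} [RCLike 𝕜] [Fintype ι]
    [DecidableEq κ]
    {v : κ → EuclideanSpace 𝕜 ι} (hv : Orthonormal 𝕜 v) :
    (Matrix.of fun i a => v a i)ᴴ * Matrix.of (fun i a => v a i) = 1 := by
  ext a b
  rw [mul_apply, one_apply, ← orthonormal_iff_ite.1 hv a b,
    EuclideanSpace.inner_eq_star_dotProduct, dotProduct]
  simp only [conjTranspose_apply, of_apply]
  exact Finset.sum_congr rfl fun i _ => mul_comm _ _

lemma Submodule.exists_basis_orthonormal {𝕜 ι : Type*} [RCLike 𝕜] [Fintype ι] {p : ℕ}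
    (V : Submodule 𝕜 (ι → 𝕜)) (hV : finrank 𝕜 V = p) :
    ∃ b : Basis (Fin p) 𝕜 V, Orthonormal 𝕜 fun a => WithLp.toLp 2 (b a : ι → 𝕜) := by
  let eL : EuclideanSpace 𝕜 ι ≃ₗ[𝕜] (ι → 𝕜) := WithLp.linearEquiv 2 𝕜 (ι → 𝕜)
  let V' : Submodule 𝕜 (EuclideanSpace 𝕜 ι) := V.map eL.symm.toLinearMap
  let e : V ≃ₗ[𝕜] V' := eL.symm.submoduleMap V
  let ob : OrthonormalBasis (Fin p) 𝕜 V' :=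
    (stdOrthonormalBasis 𝕜 V').reindex (finCongr (e.finrank_eq.symm.trans hV))
  exact ⟨ob.toBasis.map e.symm, ob.orthonormal.comp_linearIsometry V'.subtypeₗᵢ⟩

lemma LinearMap.toMatrix_prodEquivOfIsCompl {K E ι κ : Type*} [Field K] [AddCommGroup E]
    [Module K E] [Fintype ι] [Fintype κ] [DecidableEq ι] [DecidableEq κ]
    {V W : Submodule K E} (h : IsCompl V W) (bV : Basis ι K V) (bW : Basis κ K W)
    {f : Module.End K E} (hfV : ∀ x ∈ V, f x ∈ V) (hfW : ∀ x ∈ W, f x ∈ W) :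
    toMatrix ((bV.prod bW).map (V.prodEquivOfIsCompl W h))
        ((bV.prod bW).map (V.prodEquivOfIsCompl W h)) f =
      fromBlocks (toMatrix bV bV (f.restrict hfV)) 0 0 (toMatrix bW bW (f.restrict hfW)) := by
  rw [toMatrix_map_left, toMatrix_map_right, ← toMatrix_prodMap]
  congr 1
  refine LinearMap.prod_ext (LinearMap.ext fun x => ?_) (LinearMap.ext fun x => ?_) <;>
  · simp only [LinearMap.comp_apply, LinearEquiv.coe_coe, LinearEquiv.symm_apply_eq]
    simp

lemma Matrix.basis_toMatrix_mul_mul_basis_toMatrix {K κ : Type*} [Field K] [Fintype κ]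
    [DecidableEq κ] {n : ℕ} (b : Basis κ K (Fin n → K)) (A : Matrix (Fin n) (Fin n) K) :
    b.toMatrix (Pi.basisFun K (Fin n)) * A * (Pi.basisFun K (Fin n)).toMatrix b =
      LinearMap.toMatrix b b A.mulVecLin := by
  rw [← basis_toMatrix_mul_linearMap_toMatrix_mul_basis_toMatrix (b := b) (c := b)
    (b' := Pi.basisFun K (Fin n)) (c' := Pi.basisFun K (Fin n)), LinearMap.toMatrix_eq_toMatrix',
    ← Matrix.toLin'_apply', LinearMap.toMatrix'_toLin']

theorem Matrix.exists_conj_eq_fromBlocks_of_isCompl {𝕜 ι : Type*} [RCLike 𝕜] {n p m : ℕ}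
    (A : ι → Matrix (Fin n) (Fin n) 𝕜) (l : ι → 𝕜) {V W : Submodule 𝕜 (Fin n → 𝕜)}
    (hVW : IsCompl V W) (hV : finrank 𝕜 V = p) (hW : finrank 𝕜 W = m)
    (hAV : ∀ k, ∀ v ∈ V, A k *ᵥ v = l k • v) (hAW : ∀ k, ∀ w ∈ W, A k *ᵥ w ∈ W) :
    ∃ (X Y : Matrix (Fin n) (Fin p ⊕ Fin m) 𝕜) (B : ι → Matrix (Fin m) (Fin m) 𝕜),
      (X.submatrix id Sum.inl)ᴴ * X.submatrix id Sum.inl = 1 ∧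
      Yᴴ * X = 1 ∧ X * Yᴴ = 1 ∧
      ∀ k, Yᴴ * A k * X = fromBlocks (l k • 1) 0 0 (B k) := by
  obtain ⟨bV, hbV⟩ := V.exists_basis_orthonormal hV
  let bW := Module.finBasisOfFinrankEq 𝕜 W hW
  let b := (bV.prod bW).map (V.prodEquivOfIsCompl W hVW)
  let std := Pi.basisFun 𝕜 (Fin n)
  refine ⟨std.toMatrix b, (b.toMatrix std)ᴴ,
    fun k => LinearMap.toMatrix bW bW ((A k).mulVecLin.restrict (hAW k)), ?_,
    by rw [conjTranspose_conjTranspose]; exact b.toMatrix_mul_toMatrix_flip std,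
    by rw [conjTranspose_conjTranspose]; exact std.toMatrix_mul_toMatrix_flip b,
    fun k => ?_⟩
  · convert conjTranspose_mul_self_of_orthonormal hbV using 2 <;>
    · ext i a
      simp [b, std, Basis.toMatrix_apply]
  · have hV' : ∀ v ∈ V, (A k).mulVecLin v ∈ V := fun v hv => by
      rw [mulVecLin_apply, hAV k v hv]
      exact V.smul_mem _ hv
    have hrestrict : (A k).mulVecLin.restrict hV' = l k • LinearMap.id :=
      LinearMap.ext fun v => Subtype.ext (hAV k v v.2)
    rw [conjTranspose_conjTranspose, basis_toMatrix_mul_mul_basis_toMatrix,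
      LinearMap.toMatrix_prodEquivOfIsCompl hVW bV bW hV' (hAW k), hrestrict, map_smul,
      LinearMap.toMatrix_id]

theorem stmt_6_general (n d p : ℕ)
    (A : Fin d → Matrix (Fin n) (Fin n) ℂ)
    (hcomm : ∀ j k, A j * A k = A k * A j)
    -- a simultaneous unitary triangularization defining the joint eigenvalues
    (U : Matrix (Fin n) (Fin n) ℂ) (hU : Uᴴ * U = 1 ∧ U * Uᴴ = 1)
    (htri : ∀ k, ((Uᴴ * A k * U).BlockTriangular (id : Fin n → Fin n)))
    (l : Fin d → ℂ)
    -- algebraic multiplicity of 𝛌 = l is p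
    (halg : (Finset.univ.filter (fun i : Fin n => ∀ k, (Uᴴ * A k * U) i i = l k)).card = p)
    -- geometric multiplicity of 𝛌 = l is p (semisimplicity)
    (hgeo : Module.finrank ℂ
      ↥(⨅ k, LinearMap.ker ((A k).mulVecLin - l k • LinearMap.id)) = p) :
    ∃ (X Y : Matrix (Fin n) (Fin p ⊕ Fin (n - p)) ℂ)
      (B : Fin d → Matrix (Fin (n - p)) (Fin (n - p)) ℂ),
      (X.submatrix id Sum.inl)ᴴ * X.submatrix id Sum.inl = 1 ∧
      Yᴴ * X = 1 ∧ X * Yᴴ = 1 ∧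
      ∀ k, Yᴴ * A k * X = Matrix.fromBlocks (l k • 1) 0 0 (B k) := by
  let f k := (A k).mulVecLin
  have hf : ∀ j k, Commute (f j) (f k) := fun j k => by
    rw [commute_iff_eq, mul_eq_comp, mul_eq_comp, ← mulVecLin_mul, ← mulVecLin_mul, hcomm]
  have hUf : ∀ k, Uᴴ.mulVecLin ∘ₗ f k = (Uᴴ * A k * U).mulVecLin ∘ₗ Uᴴ.mulVecLin := fun k => by
    rw [← mulVecLin_mul, ← mulVecLin_mul, Matrix.mul_assoc _ U, hU.2, Matrix.mul_one]
  have hUinj : Function.Injective Uᴴ.mulVecLin := fun v w hvw => by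
    simpa [mulVec_mulVec, hU.2] using congrArg (U *ᵥ ·) hvw
  have hN : finrank ℂ (jointGenEigenspace f l) ≤ p :=
    ((finrank_jointGenEigenspace_le_of_injective hUinj hUf l).trans
      (BlockTriangular.finrank_jointGenEigenspace_le htri l)).trans_eq
      -- the two filters differ only in their `Decidable` instances
      (by convert halg)
  have hVN : ⨅ k, LinearMap.ker ((A k).mulVecLin - l k • LinearMap.id) = jointGenEigenspace f l :=
    Submodule.eq_of_le_of_finrank_le
      (iInf_mono fun k => by
        rw [← one_eq_id, ← eigenspace_def]
        exact eigenspace_le_maxGenEigenspace)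
      (hgeo ▸ hN)
  have hcompl := isCompl_jointGenEigenspace_iSup_ne hf l
  refine exists_conj_eq_fromBlocks_of_isCompl A l hcompl (hVN ▸ hgeo) ?_ ?_ ?_
  · have := Submodule.finrank_add_eq_of_isCompl hcompl
    rw [finrank_fin_fun, ← hVN, hgeo] at this
    omega
  · intro k v hv
    rw [← hVN, Submodule.mem_iInf] at hv
    simpa [sub_eq_zero] using hv k
  · exact fun k w hw => map_iSup_jointGenEigenspace_ne_le hf k l (Submodule.mem_map_of_mem hw)

/-- Semisimple partition: if `𝛌 = (λ₁,…,λ_d)` is a semisimple joint eigenvalue of multiplicity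
`p` of a commuting family (its algebraic multiplicity, read off from a simultaneous unitary
triangularization, equals the dimension `p` of the common eigenspace), then there exist
`X = [X₁ X₂]`, `Y = [Y₁ Y₂]` with `X₁*X₁ = I_p`, `Y*X = Iₙ` (and `X` invertible), such that
`Y*AₖX = diag(λₖ I_p, A₂₂^{(k)})` for all `k`. -/
theorem stmt_6 (n d p : ℕ) (hp : 0 < p) (hpn : p ≤ n)
    (A : Fin d → Matrix (Fin n) (Fin n) ℂ)
    (hcomm : ∀ j k, A j * A k = A k * A j)
    -- a simultaneous unitary triangularization defining the joint eigenvalues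
    (U : Matrix (Fin n) (Fin n) ℂ) (hU : Uᴴ * U = 1 ∧ U * Uᴴ = 1)
    (htri : ∀ k, ((Uᴴ * A k * U).BlockTriangular (id : Fin n → Fin n)))
    (l : Fin d → ℂ)
    -- algebraic multiplicity of 𝛌 = l is p
    (halg : (Finset.univ.filter (fun i : Fin n => ∀ k, (Uᴴ * A k * U) i i = l k)).card = p)
    -- geometric multiplicity of 𝛌 = l is p (semisimplicity)
    (hgeo : Module.finrank ℂ
      ↥(⨅ k, LinearMap.ker ((A k).mulVecLin - l k • LinearMap.id)) = p) :
    ∃ (X Y : Matrix (Fin n) (Fin p ⊕ Fin (n - p)) ℂ)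
      (B : Fin d → Matrix (Fin (n - p)) (Fin (n - p)) ℂ),
      (X.submatrix id Sum.inl)ᴴ * X.submatrix id Sum.inl = 1 ∧
      Yᴴ * X = 1 ∧ X * Yᴴ = 1 ∧
      ∀ k, Yᴴ * A k * X = Matrix.fromBlocks (l k • 1) 0 0 (B k) :=
  stmt_6_general n d p A hcomm U hU htri l halg hgeo
end

section
/- A commuting family 𝒜 = {A₁,…,A_d} of n×n complex matrices is simultaneously diagonalizable if and only if every joint eigenvalue of 𝒜 is semisimple. -/
/-!
Let `λ j = (T k j j)_k` be the diagonal of the triangular family `T k = Uᴴ * A k * U` and `E χ`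
the joint eigenspace of the `A k` at `χ`, of the same dimension as that of the `T k`. A joint
eigenvector of the `T k` is determined by its coordinates at the positions `j` with `λ j = χ`
(look at its last nonzero coordinate), so `dim E χ ≤ #{j | λ j = χ}`, and these multiplicities
add up to `n`. Joint eigenspaces at distinct `χ` are independent, hence the family is
simultaneously diagonalizable iff they span, iff `∑ χ, dim E χ = n = ∑ χ, #{j | λ j = χ}`,
iff every one of the inequalities is an equality.
-/

open Matrix Module Finset

variable {ι R K V W m : Type*}

section JointEigenspace

variable [CommRing R] [AddCommGroup V] [Module R V] [AddCommGroup W] [Module R W]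

def jointEigenspace (f : ι → End R V) (χ : ι → R) : Submodule R V :=
  ⨅ k, LinearMap.ker (f k - χ k • LinearMap.id)

theorem mem_jointEigenspace {f : ι → End R V} {χ : ι → R} {x : V} :
    x ∈ jointEigenspace f χ ↔ ∀ k, f k x = χ k • x := by
  simp [jointEigenspace, sub_eq_zero]

theorem apply_mem_jointEigenspace {f : ι → End R V} {χ : ι → R} {x : V}
    (hx : x ∈ jointEigenspace f χ) (k : ι) : f k x ∈ jointEigenspace f χ := by
  rw [mem_jointEigenspace.mp hx k]
  exact Submodule.smul_mem _ _ hx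

theorem jointEigenspace_conj (e : V ≃ₗ[R] W) (f : ι → End R V) (χ : ι → R) :
    jointEigenspace (fun k => e.conj (f k)) χ = (jointEigenspace f χ).map (e : V →ₗ[R] W) := by
  ext x
  simp only [mem_jointEigenspace, Submodule.mem_map_equiv, LinearEquiv.conj_apply,
    LinearMap.comp_apply, LinearEquiv.coe_coe]
  refine forall_congr' fun k => ?_
  rw [← e.symm.injective.eq_iff, e.symm_apply_apply, map_smul]

theorem iSupIndep_jointEigenspace [IsDomain R] [IsTorsionFree R V] (f : ι → End R V) :
    iSupIndep (jointEigenspace f) := by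
  classical
  suffices ∀ χ (s : Finset (ι → R)), χ ∉ s →
      Disjoint (jointEigenspace f χ) (s.sup (jointEigenspace f)) by
    simpa only [iSupIndep_iff_supIndep, Finset.supIndep_iff_disjoint_erase] using
      fun s χ _ => this χ _ (s.notMem_erase χ)
  intro χ s
  induction s using Finset.induction_on with
  | empty => simp
  | insert ψ s _ ih =>
    rw [Finset.mem_insert, not_or]
    rintro ⟨hχψ, hχs⟩
    obtain ⟨k, hk⟩ := Function.ne_iff.mp hχψ
    have hmaps : ∀ z ∈ s.sup (jointEigenspace f), f k z ∈ s.sup (jointEigenspace f) := by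
      have : s.sup (jointEigenspace f) ≤ (s.sup (jointEigenspace f)).comap (f k) :=
        Finset.sup_le fun φ hφ z hz =>
          Finset.le_sup (f := jointEigenspace f) hφ (apply_mem_jointEigenspace hz k)
      exact fun z hz => this hz
    rw [Finset.sup_insert, Submodule.disjoint_def]
    rintro x hx hx'
    obtain ⟨y, hy, z, hz, rfl⟩ := Submodule.mem_sup.mp hx'
    -- `f k - ψ k` kills `y` and preserves `s.sup (jointEigenspace f)`
    have hmem : (χ k - ψ k) • (y + z) ∈ s.sup (jointEigenspace f) := by
      have hx_k := mem_jointEigenspace.mp hx k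
      have hy_k := mem_jointEigenspace.mp hy k
      rw [map_add] at hx_k
      have : (χ k - ψ k) • (y + z) = f k z - ψ k • z := by
        rw [sub_smul, ← hx_k, hy_k, smul_add]; abel
      rw [this]
      exact Submodule.sub_mem _ (hmaps z hz) (Submodule.smul_mem _ _ hz)
    have hzero := (Submodule.disjoint_def.mp (ih hχs)) _
      (Submodule.smul_mem _ _ hx) hmem
    exact (smul_eq_zero.mp hzero).resolve_left (sub_ne_zero.mpr hk)

end JointEigenspace

theorem Submodule.finrank_finset_sup_of_supIndep [Field K] [AddCommGroup V] [Module K V]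
    [FiniteDimensional K V] [DecidableEq ι] {s : Finset ι} {p : ι → Submodule K V}
    (h : s.SupIndep p) : finrank K ↥(s.sup p) = ∑ i ∈ s, finrank K ↥(p i) := by
  induction s using Finset.induction_on with
  | empty => simp
  | insert a s ha ih =>
    have hdisj : Disjoint (p a) (s.sup p) := h (subset_insert a s) (mem_insert_self a s) ha
    rw [Finset.sup_insert, Finset.sum_insert ha, ← ih (h.subset (subset_insert a s)),
      ← Submodule.finrank_sup_add_finrank_inf_eq, hdisj.eq_bot, finrank_bot, add_zero]

theorem iSup_jointEigenspace_eq_top_iff [Field K] [AddCommGroup V] [Module K V]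
    [FiniteDimensional K V] [Fintype m] [DecidableEq (ι → K)] {f : ι → End K V}
    (μ : m → ι → K) (hcard : Fintype.card m = finrank K V)
    (hle : ∀ χ, finrank K ↥(jointEigenspace f χ) ≤ #{j | μ j = χ}) :
    ⨆ χ, jointEigenspace f χ = ⊤ ↔
      ∀ i, #{j | μ j = μ i} = finrank K ↥(jointEigenspace f (μ i)) := by
  set S := univ.image μ
  have hbot : ∀ χ ∉ S, jointEigenspace f χ = ⊥ := fun χ hχ => by
    rw [← Submodule.finrank_eq_zero, ← Nat.le_zero]
    refine (hle χ).trans_eq (card_eq_zero.mpr (filter_eq_empty_iff.mpr fun j _ hj => hχ ?_))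
    exact mem_image.mpr ⟨j, mem_univ j, hj⟩
  have hsup : ⨆ χ, jointEigenspace f χ = S.sup (jointEigenspace f) := by
    refine le_antisymm (iSup_le fun χ => ?_) (Finset.sup_le fun χ _ => le_iSup _ χ)
    by_cases hχ : χ ∈ S
    · exact Finset.le_sup hχ
    · rw [hbot χ hχ]; exact bot_le
  have hsum : ∑ χ ∈ S, #{j | μ j = χ} = finrank K V := by
    rw [← card_eq_sum_card_image, card_univ, hcard]
  rw [hsup, Submodule.eq_top_iff_finrank_eq,
    Submodule.finrank_finset_sup_of_supIndep ((iSupIndep_jointEigenspace f).supIndep' S), ← hsum,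
    Finset.sum_eq_sum_iff_of_le fun χ _ => hle χ]
  simp [S, eq_comm]

section Matrix

variable [Fintype m]

theorem Matrix.BlockTriangular.mulVec_apply_of_forall_lt [CommRing R] [LinearOrder m]
    {T : Matrix m m R} (hT : T.BlockTriangular id) {x : m → R} {j : m}
    (hx : ∀ l, j < l → x l = 0) : (T *ᵥ x) j = T j j * x j := by
  simp only [mulVec, dotProduct]
  refine Finset.sum_eq_single j (fun l _ hl => ?_) (by simp)
  rcases hl.lt_or_gt with h | h
  · rw [hT h, zero_mul]
  · rw [hx l h, mul_zero]

-- At the last nonzero coordinate `j` of `x`, the eigen-equations read `T k j j * x j = χ k * x j`.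
theorem Matrix.eq_zero_of_mem_jointEigenspace_of_blockTriangular [Field K] [LinearOrder m]
    {T : ι → Matrix m m K} (hT : ∀ k, (T k).BlockTriangular id) {χ : ι → K} {x : m → K}
    (hx : x ∈ jointEigenspace (fun k => (T k).mulVecLin) χ)
    (hdiag : ∀ j, (∀ k, T k j j = χ k) → x j = 0) : x = 0 := by
  classical
  by_contra hne
  obtain ⟨j, hj, hmax⟩ := (univ.filter (x · ≠ 0)).exists_max_image id
    (let ⟨j, hj⟩ := Function.ne_iff.mp hne; ⟨j, by simpa using hj⟩)
  simp only [mem_filter, mem_univ, true_and, id] at hj hmax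
  refine hj (hdiag j fun k => mul_right_cancel₀ hj ?_)
  have hlast : ∀ l, j < l → x l = 0 := fun l hl => by
    by_contra hl'; exact (hmax l hl').not_gt hl
  rw [← (hT k).mulVec_apply_of_forall_lt hlast]
  exact congrFun (mem_jointEigenspace.mp hx k) j

theorem Matrix.finrank_jointEigenspace_le_card_of_blockTriangular [Field K] [LinearOrder m]
    {T : ι → Matrix m m K} (hT : ∀ k, (T k).BlockTriangular id) (χ : ι → K)
    [DecidablePred fun j : m => ∀ k, T k j j = χ k] :
    finrank K ↥(jointEigenspace (fun k => (T k).mulVecLin) χ) ≤ #{j | ∀ k, T k j j = χ k} := by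
  set E := jointEigenspace (fun k => (T k).mulVecLin) χ
  set s : Finset m := {j | ∀ k, T k j j = χ k}
  let restrict : E →ₗ[K] (s → K) := (LinearMap.funLeft K K ((↑) : s → m)).comp E.subtype
  have hinj : Function.Injective restrict := by
    refine (injective_iff_map_eq_zero restrict).mpr fun x hx => Subtype.ext ?_
    refine eq_zero_of_mem_jointEigenspace_of_blockTriangular hT x.2 fun j hj => ?_
    exact congrFun hx ⟨j, by simpa [s] using hj⟩
  calc finrank K E ≤ finrank K (s → K) := LinearMap.finrank_le_finrank_of_injective hinj
    _ = #s := by simp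

variable [DecidableEq m]

theorem Matrix.finrank_jointEigenspace_inv_mul_mul [Field K] {P : Matrix m m K} (hP : IsUnit P)
    (A : ι → Matrix m m K) (χ : ι → K) :
    finrank K ↥(jointEigenspace (fun k => (P⁻¹ * A k * P).mulVecLin) χ) =
      finrank K ↥(jointEigenspace (fun k => (A k).mulVecLin) χ) := by
  have hdet := (isUnit_iff_isUnit_det P).mp hP
  let e : (m → K) ≃ₗ[K] (m → K) := .ofLinearMap P⁻¹.mulVecLin P.mulVecLin
    (by rw [← mulVecLin_mul, nonsing_inv_mul _ hdet, mulVecLin_one])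
    (by rw [← mulVecLin_mul, mul_nonsing_inv _ hdet, mulVecLin_one])
  have hconj : (fun k => (P⁻¹ * A k * P).mulVecLin) = fun k => e.conj (A k).mulVecLin := by
    ext k : 1
    rw [LinearEquiv.conj_apply, mulVecLin_mul, mulVecLin_mul]
    rfl
  rw [hconj, jointEigenspace_conj, LinearEquiv.finrank_map_eq]

theorem Matrix.isDiag_inv_mul_mul_iff [CommRing R] {X : Matrix m m R} (hX : IsUnit X)
    (A : Matrix m m R) :
    (X⁻¹ * A * X).IsDiag ↔ ∀ j, ∃ c : R, A *ᵥ X.col j = c • X.col j := by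
  have hdet := (isUnit_iff_isUnit_det X).mp hX
  set D := X⁻¹ * A * X
  have hcol : ∀ j, D.col j = X⁻¹ *ᵥ (A *ᵥ X.col j) := fun j => by
    rw [← mulVec_single_one, ← mulVec_single_one X, mulVec_mulVec, mulVec_mulVec]
  constructor
  · refine fun hdiag j => ⟨D j j, ?_⟩
    have hDj : D.col j = D j j • Pi.single j 1 := by
      ext i
      by_cases hij : i = j
      · simp [hij]
      · simp [hij, hdiag hij]
    rw [← one_mulVec (A *ᵥ X.col j), ← mul_nonsing_inv X hdet, ← mulVec_mulVec, ← hcol, hDj,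
      mulVec_smul, mulVec_single_one]
  · rintro h i j hij
    obtain ⟨c, hc⟩ := h j
    have := congrFun (hcol j) i
    rw [hc, mulVec_smul, ← mulVec_single_one X j, mulVec_mulVec, nonsing_inv_mul X hdet,
      one_mulVec] at this
    simpa [hij] using this

theorem Matrix.exists_isDiag_iff_iSup_jointEigenspace_eq_top [Field K] (A : ι → Matrix m m K) :
    (∃ X : Matrix m m K, IsUnit X ∧ ∀ k, (X⁻¹ * A k * X).IsDiag) ↔
      ⨆ χ, jointEigenspace (fun k => (A k).mulVecLin) χ = ⊤ := by
  classical
  set E := jointEigenspace fun k => (A k).mulVecLin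
  constructor
  · rintro ⟨X, hX, hdiag⟩
    choose c hc using fun k => (isDiag_inv_mul_mul_iff hX (A k)).mp (hdiag k)
    have hcol : ∀ j, X.col j ∈ E fun k => c k j := fun j => mem_jointEigenspace.mpr fun k => hc k j
    have hrange : LinearMap.range X.mulVecLin = ⊤ :=
      LinearMap.range_eq_top.mpr (mulVec_surjective_iff_isUnit.mpr hX)
    rw [eq_top_iff, ← hrange, range_mulVecLin, Submodule.span_le]
    rintro _ ⟨j, rfl⟩
    exact Submodule.mem_iSup_of_mem _ (hcol j)
  · intro htop
    have hint := DirectSum.isInternal_submodule_of_iSupIndep_of_iSup_eq_top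
      (iSupIndep_jointEigenspace _) htop
    let b₀ := hint.collectedBasis fun χ => finBasis K (E χ)
    let b := b₀.reindex (b₀.indexEquiv (Pi.basisFun K m))
    have hb : ∀ j, ∃ χ, b j ∈ E χ := fun j => ⟨_, by
      simpa only [b, Basis.reindex_apply] using hint.collectedBasis_mem _ _⟩
    let X := (Pi.basisFun K m).toMatrix b
    have hXcol : ∀ j, X.col j = b j := fun j => by ext i; simp [X, Basis.toMatrix_apply]
    have hX : IsUnit X := have := (Pi.basisFun K m).invertibleToMatrix b; isUnit_of_invertible X
    refine ⟨X, hX, fun k => (isDiag_inv_mul_mul_iff hX (A k)).mpr fun j => ?_⟩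
    obtain ⟨χ, hχ⟩ := hb j
    exact ⟨χ k, by rw [hXcol]; exact mem_jointEigenspace.mp hχ k⟩

end Matrix

theorem stmt_7_general (n d : ℕ) (A : Fin d → Matrix (Fin n) (Fin n) ℂ)
    (U : Matrix (Fin n) (Fin n) ℂ) (hU : Uᴴ * U = 1 ∧ U * Uᴴ = 1)
    (htri : ∀ k, ((Uᴴ * A k * U).BlockTriangular (id : Fin n → Fin n))) :
    (∃ X : Matrix (Fin n) (Fin n) ℂ, IsUnit X ∧ ∀ k, (X⁻¹ * A k * X).IsDiag) ↔
      ∀ i : Fin n,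
        (Finset.univ.filter (fun j : Fin n =>
            ∀ k, (Uᴴ * A k * U) j j = (Uᴴ * A k * U) i i)).card =
          Module.finrank ℂ
            ↥(⨅ k, LinearMap.ker ((A k).mulVecLin - ((Uᴴ * A k * U) i i) • LinearMap.id)) := by
  have hUinv : U⁻¹ = Uᴴ := inv_eq_left_inv hU.1
  have hUunit : IsUnit U := .of_mul_eq_one_right _ hU.1
  rw [exists_isDiag_iff_iSup_jointEigenspace_eq_top,
    iSup_jointEigenspace_eq_top_iff (fun j k => (Uᴴ * A k * U) j j) (by simp) fun χ => ?_]
  · simp only [funext_iff]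
    rfl
  · rw [← finrank_jointEigenspace_inv_mul_mul hUunit, hUinv]
    convert finrank_jointEigenspace_le_card_of_blockTriangular htri χ using 2
    simp [funext_iff]

/-- A commuting family is simultaneously diagonalizable if and only if every joint eigenvalue
(read off from a simultaneous unitary triangularization) is semisimple, i.e. its algebraic
multiplicity equals the dimension of the corresponding common eigenspace. -/
theorem stmt_7 (n d : ℕ) (A : Fin d → Matrix (Fin n) (Fin n) ℂ)
    (hcomm : ∀ j k, A j * A k = A k * A j)
    (U : Matrix (Fin n) (Fin n) ℂ) (hU : Uᴴ * U = 1 ∧ U * Uᴴ = 1)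
    (htri : ∀ k, ((Uᴴ * A k * U).BlockTriangular (id : Fin n → Fin n))) :
    (∃ X : Matrix (Fin n) (Fin n) ℂ, IsUnit X ∧ ∀ k, (X⁻¹ * A k * X).IsDiag) ↔
      ∀ i : Fin n,
        (Finset.univ.filter (fun j : Fin n =>
            ∀ k, (Uᴴ * A k * U) j j = (Uᴴ * A k * U) i i)).card =
          Module.finrank ℂ
            ↥(⨅ k, LinearMap.ker ((A k).mulVecLin - ((Uᴴ * A k * U) i i) • LinearMap.id)) :=
  stmt_7_general n d A U hU htri
end

section
/- Let 𝛌^{(1)},…,𝛌^{(n)} ∈ ℂ^d, let 𝛌 be one of them with multiplicity p (i.e., appearing p times in the list), and for unit μ ∈ ℂ^d define d(μ) = min over j with 𝛌^{(j)} ≠ 𝛌 of |μ*(𝛌^{(j)} − 𝛌)| / ‖𝛌^{(j)} − 𝛌‖₂. If μ ∼ Unif(S_ℂ^{d−1}) then for every C ∈ [0, 1/√(d−1)], Prob(d(μ) ≥ C) ≥ 1 − (n − p)(d − 1)C². -/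
/-
By unitary invariance, `P (‖μᴴ v‖ < C ‖v‖) = P (‖μ 0‖ < C)` for every `v ≠ 0`. To evaluate
the right side, compare `P` with the standard complex Gaussian `γ` on `ℂ^d`, which is also
unitarily invariant: Fubini on `{(μ, z) | ‖μᴴ z‖ < C ‖z‖}` gives
`P (‖μ 0‖ < C) = γ (‖z 0‖ < C ‖z‖)`. Writing `z = (z 0, z')`, the event is
`‖z 0‖² < c² ‖z'‖²` with `c² = C² / (1 - C²)`, and `‖z 0‖²` is exponentially distributed, so its
probability is `1 - E[exp (-c² ‖z'‖²)] = 1 - (1 - C²)^(d-1)`, which is at most `(d - 1) C²` by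
Bernoulli's inequality. A union bound over the `n - p` indices `j` with `L j ≠ l` finishes the
proof.
-/

open MeasureTheory Matrix

lemma lintegral_fin_pi_prod {E : Type*} [MeasurableSpace E] {n : ℕ} (μ : Fin n → Measure E)
    [∀ i, SigmaFinite (μ i)] {f : Fin n → E → ENNReal} (hf : ∀ i, Measurable (f i)) :
    ∫⁻ x, ∏ i, f i (x i) ∂Measure.pi μ = ∏ i, ∫⁻ a, f i a ∂μ i := by
  induction n with
  | zero => simp
  | succ n ih =>
    have hmp := measurePreserving_piFinSuccAbove μ 0
    calc ∫⁻ x, ∏ i, f i (x i) ∂Measure.pi μ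
        = ∫⁻ x, (fun p : E × (Fin n → E) => f 0 p.1 * ∏ j, f (Fin.succAbove 0 j) (p.2 j))
            (MeasurableEquiv.piFinSuccAbove (fun _ => E) 0 x) ∂Measure.pi μ := by
          simp [Fin.prod_univ_succAbove _ 0, Fin.tail]
      _ = ∫⁻ p : E × (Fin n → E), f 0 p.1 * ∏ j, f (Fin.succAbove 0 j) (p.2 j)
            ∂(μ 0).prod (Measure.pi fun j => μ (Fin.succAbove 0 j)) :=
          hmp.lintegral_comp_emb (MeasurableEquiv.measurableEmbedding _)
            fun p => f 0 p.1 * ∏ j, f (Fin.succAbove 0 j) (p.2 j)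
      _ = ∏ i, ∫⁻ a, f i a ∂μ i := by
          have hg : Measurable fun y : Fin n → E => ∏ j, f (Fin.succAbove 0 j) (y j) := by
            fun_prop
          rw [lintegral_prod_mul (hf 0).aemeasurable hg.aemeasurable, ih _ fun j => hf _,
            Fin.prod_univ_succAbove _ 0]

lemma one_sub_card_mul_le_measure_biInter {Ω ι : Type*} [MeasurableSpace Ω] (P : Measure Ω)
    [IsProbabilityMeasure P] (s : Finset ι) (A : ι → Set Ω) {ε : ENNReal}
    (h : ∀ i ∈ s, P (A i)ᶜ ≤ ε) :
    1 - s.card * ε ≤ P (⋂ i ∈ s, A i) := by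
  have hcompl : P (⋂ i ∈ s, A i)ᶜ ≤ s.card * ε :=
    calc P (⋂ i ∈ s, A i)ᶜ = P (⋃ i ∈ s, (A i)ᶜ) := by rw [Set.compl_iInter₂]
      _ ≤ ∑ i ∈ s, P (A i)ᶜ := measure_biUnion_finset_le s _
      _ ≤ ∑ _ ∈ s, ε := Finset.sum_le_sum h
      _ = s.card * ε := by rw [Finset.sum_const, nsmul_eq_mul]
  calc 1 - s.card * ε ≤ 1 - P (⋂ i ∈ s, A i)ᶜ := tsub_le_tsub_left hcompl 1
    _ ≤ P (⋂ i ∈ s, A i) := by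
      rw [tsub_le_iff_right, ← measure_univ (μ := P), ← Set.union_compl_self (⋂ i ∈ s, A i)]
      exact measure_union_le _ _

namespace ComplexSphere

open Real

variable {d : ℕ}

noncomputable def sqNorm (x : Fin d → ℂ) : ℝ := ∑ k, ‖x k‖ ^ 2

lemma sqNorm_nonneg (x : Fin d → ℂ) : 0 ≤ sqNorm x := by
  unfold sqNorm; positivity

@[fun_prop]
lemma continuous_sqNorm : Continuous (sqNorm (d := d)) := by
  unfold sqNorm; fun_prop

lemma sqNorm_eq_zero {x : Fin d → ℂ} : sqNorm x = 0 ↔ x = 0 := by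
  simp [sqNorm, Finset.sum_eq_zero_iff_of_nonneg, funext_iff]

lemma sqNorm_eq_norm_toLp_sq (x : Fin d → ℂ) : sqNorm x = ‖WithLp.toLp 2 x‖ ^ 2 := by
  simp [sqNorm, EuclideanSpace.norm_sq_eq]

lemma sqNorm_real_smul (r : ℝ) (x : Fin d → ℂ) : sqNorm ((r : ℂ) • x) = r ^ 2 * sqNorm x := by
  simp [sqNorm, Finset.mul_sum, mul_pow]

lemma ofReal_sqNorm (x : Fin d → ℂ) : (sqNorm x : ℂ) = star x ⬝ᵥ x := by
  simp [sqNorm, dotProduct, Complex.conj_mul']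

lemma sqNorm_mulVec {U : Matrix (Fin d) (Fin d) ℂ} (hU : U ∈ unitaryGroup (Fin d) ℂ)
    (x : Fin d → ℂ) : sqNorm (U *ᵥ x) = sqNorm x := by
  have h := ofReal_sqNorm (U *ᵥ x)
  rw [star_mulVec, dotProduct_mulVec, vecMul_vecMul, ← star_eq_conjTranspose, hU.1, vecMul_one,
    ← ofReal_sqNorm] at h
  exact_mod_cast h

lemma exists_mem_unitaryGroup_mulVec_single {w : Fin d → ℂ} (hw : sqNorm w = 1) (i : Fin d) :
    ∃ U ∈ unitaryGroup (Fin d) ℂ, U *ᵥ Pi.single i 1 = w := by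
  have hw' : ‖WithLp.toLp 2 w‖ = 1 := by
    rw [← sq_eq_sq₀ (norm_nonneg _) zero_le_one, one_pow, ← sqNorm_eq_norm_toLp_sq, hw]
  let b := InnerProductSpace.gramSchmidtOrthonormalBasis (𝕜 := ℂ) (by simp)
    (Pi.single i (WithLp.toLp 2 w) : Fin d → EuclideanSpace ℂ (Fin d))
  have hb : b i = WithLp.toLp 2 w := by
    rw [InnerProductSpace.gramSchmidtOrthonormalBasis_apply_of_orthogonal]
    · simp [hw']
    · intro j k hjk
      rcases eq_or_ne j i with rfl | hj
      · simp [hjk.symm]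
      · simp [Pi.single_apply, hj]
    · rw [Pi.single_eq_same, ← norm_ne_zero_iff, hw']
      exact one_ne_zero
  refine ⟨(EuclideanSpace.basisFun (Fin d) ℂ).toBasis.toMatrix b,
    (EuclideanSpace.basisFun (Fin d) ℂ).toMatrix_orthonormalBasis_mem_unitary b, ?_⟩
  ext j
  simp [Matrix.mulVec_single, Module.Basis.toMatrix_apply, hb]

def IsUnitarilyInvariant (ν : Measure (Fin d → ℂ)) : Prop :=
  ∀ U ∈ unitaryGroup (Fin d) ℂ, ν.map (fun x => U *ᵥ x) = ν

@[fun_prop]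
lemma measurable_mulVec (U : Matrix (Fin d) (Fin d) ℂ) :
    Measurable (fun x : Fin d → ℂ => U *ᵥ x) :=
  (continuous_const.matrix_mulVec continuous_id).measurable

lemma norm_star_dotProduct_comm (x y : Fin d → ℂ) : ‖star x ⬝ᵥ y‖ = ‖star y ⬝ᵥ x‖ := by
  rw [← norm_star, ← star_dotProduct_star, star_star]

namespace IsUnitarilyInvariant

variable {ν : Measure (Fin d → ℂ)}

lemma measure_preimage (hν : IsUnitarilyInvariant ν) {u : Fin d → ℂ} (hu : sqNorm u = 1)
    (i : Fin d) {s : Set (ℂ × ℝ)} (hs : MeasurableSet s) :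
    ν {z | (star u ⬝ᵥ z, sqNorm z) ∈ s} = ν {z | (z i, sqNorm z) ∈ s} := by
  obtain ⟨U, hU, rfl⟩ := exists_mem_unitaryGroup_mulVec_single hu i
  have hUH : Uᴴ ∈ unitaryGroup (Fin d) ℂ := Unitary.star_mem hU
  have hpre : {z | (star (U *ᵥ Pi.single i 1) ⬝ᵥ z, sqNorm z) ∈ s}
      = (fun z => Uᴴ *ᵥ z) ⁻¹' {w | (w i, sqNorm w) ∈ s} := by
    ext z
    change (_, _) ∈ s ↔ (_, _) ∈ s
    rw [star_mulVec, ← dotProduct_mulVec, Pi.star_single, star_one, single_dotProduct, one_mul,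
      sqNorm_mulVec hUH]
  have hmeas : MeasurableSet {w : Fin d → ℂ | (w i, sqNorm w) ∈ s} :=
    (by fun_prop : Measurable fun w : Fin d → ℂ => (w i, sqNorm w)) hs
  rw [hpre, ← Measure.map_apply (measurable_mulVec _) hmeas, hν _ hUH]

lemma measure_norm_dotProduct_lt (hν : IsUnitarilyInvariant ν) {v : Fin d → ℂ} (hv : v ≠ 0)
    (i : Fin d) (C : ℝ) :
    ν {μ | ‖star μ ⬝ᵥ v‖ < C * √(sqNorm v)} = ν {μ | ‖μ i‖ < C} := by
  have hv' : 0 < sqNorm v := (sqNorm_nonneg v).lt_of_ne' (sqNorm_eq_zero.not.2 hv)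
  set r := √(sqNorm v)
  have hr : 0 < r := Real.sqrt_pos.2 hv'
  set u : Fin d → ℂ := ((r⁻¹ : ℝ) : ℂ) • v
  have hu : sqNorm u = 1 := by
    rw [sqNorm_real_smul, inv_pow, Real.sq_sqrt hv'.le, inv_mul_cancel₀ hv'.ne']
  have hnorm (μ : Fin d → ℂ) : ‖star μ ⬝ᵥ v‖ = r * ‖star u ⬝ᵥ μ‖ := by
    simp [u, norm_star_dotProduct_comm μ, abs_of_pos hr, hr.ne']
  have h := hν.measure_preimage hu i (s := {p | ‖p.1‖ < C})
    (measurableSet_lt (by fun_prop) (by fun_prop))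
  simp only [hnorm, mul_comm r, mul_lt_mul_iff_of_pos_right hr]
  exact h

lemma withDensity (hν : IsUnitarilyInvariant ν) {ρ : (Fin d → ℂ) → ENNReal} (hρ : Measurable ρ)
    (hρU : ∀ U ∈ unitaryGroup (Fin d) ℂ, ∀ z, ρ (U *ᵥ z) = ρ z) :
    IsUnitarilyInvariant (ν.withDensity ρ) := by
  intro U hU
  have hmp : MeasurePreserving (fun z => U *ᵥ z) ν ν := ⟨measurable_mulVec U, hν U hU⟩
  ext s hs
  rw [Measure.map_apply (measurable_mulVec U) hs, withDensity_apply _ (measurable_mulVec U hs),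
    withDensity_apply _ hs, ← hmp.setLIntegral_comp_preimage hs hρ]
  simp only [hρU U hU]

/-- Both sides are the `P ⊗ Q`-measure of `{(μ, z) | ‖μᴴ z‖ < C ‖z‖}`: slicing at a unit vector
`μ` and rotating `μ` to `eᵢ` under `Q` gives the right side, slicing at `z ≠ 0` and rotating
`z / ‖z‖` to `eᵢ` under `P` gives the left side. -/
lemma measure_norm_apply_lt_eq {P Q : Measure (Fin d → ℂ)}
    [IsProbabilityMeasure P] [IsProbabilityMeasure Q] (hP : IsUnitarilyInvariant P)
    (hsphere : ∀ᵐ μ ∂P, sqNorm μ = 1) (hQ : IsUnitarilyInvariant Q) (hQ0 : Q {0} = 0)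
    (i : Fin d) (C : ℝ) :
    P {μ | ‖μ i‖ < C} = Q {z | ‖z i‖ < C * √(sqNorm z)} := by
  set T := {q : (Fin d → ℂ) × (Fin d → ℂ) | ‖star q.1 ⬝ᵥ q.2‖ < C * √(sqNorm q.2)}
  have hT : MeasurableSet T :=
    measurableSet_lt (by simp only [dotProduct]; fun_prop) (by fun_prop)
  have hQslice : ∀ᵐ μ ∂P, Q (Prod.mk μ ⁻¹' T) = Q {z | ‖z i‖ < C * √(sqNorm z)} := by
    filter_upwards [hsphere] with μ hμ
    exact hQ.measure_preimage hμ i (s := {p | ‖p.1‖ < C * √p.2})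
      (measurableSet_lt (by fun_prop) (by fun_prop))
  have hPslice : ∀ᵐ z ∂Q, P ((·, z) ⁻¹' T) = P {μ | ‖μ i‖ < C} := by
    filter_upwards [measure_eq_zero_iff_ae_notMem.1 hQ0] with z hz
    exact hP.measure_norm_dotProduct_lt hz i C
  have h1 := Measure.prod_apply (μ := P) (ν := Q) hT
  rw [lintegral_congr_ae hQslice, lintegral_const, measure_univ, mul_one] at h1
  have h2 := Measure.prod_apply_symm (μ := P) (ν := Q) hT
  rw [lintegral_congr_ae hPslice, lintegral_const, measure_univ, mul_one] at h2
  rw [← h1, h2]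

end IsUnitarilyInvariant

lemma isUnitarilyInvariant_volume : IsUnitarilyInvariant (volume : Measure (Fin d → ℂ)) := by
  intro U hU
  have hdU : ‖U.det‖ = 1 := CStarRing.norm_of_mem_unitary (det_of_mem_unitary hU)
  have hdet : ((mulVecLin U).restrictScalars ℝ).det = 1 := by
    rw [LinearMap.det_restrictScalars, ← toLin'_apply', LinearMap.det_toLin',
      Algebra.norm_complex_apply, Complex.normSq_eq_norm_sq, hdU, one_pow]
  have h := Measure.map_linearMap_addHaar_eq_smul_addHaar volume (hdet ▸ one_ne_zero)
  simp only [hdet, inv_one, abs_one, ENNReal.ofReal_one, one_smul] at h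
  exact h

noncomputable def complexGaussianPDF (a : ℂ) : ℝ := π⁻¹ * rexp (-‖a‖ ^ 2)

noncomputable def complexGaussian : Measure ℂ :=
  volume.withDensity fun a => ENNReal.ofReal (complexGaussianPDF a)

lemma complexGaussianPDF_nonneg (a : ℂ) : 0 ≤ complexGaussianPDF a := by
  unfold complexGaussianPDF; positivity

@[fun_prop]
lemma measurable_complexGaussianPDF : Measurable complexGaussianPDF := by
  unfold complexGaussianPDF; fun_prop

lemma integral_exp_neg_mul_sq_norm_complex {b : ℝ} (hb : 0 < b) :
    ∫ a : ℂ, rexp (-b * ‖a‖ ^ 2) = π / b := by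
  rw [GaussianFourier.integral_rexp_neg_mul_sq_norm hb, Complex.finrank_real_complex]
  norm_num

lemma integral_complexGaussianPDF : ∫ a, complexGaussianPDF a = 1 := by
  simp_rw [complexGaussianPDF, integral_const_mul, ← neg_one_mul (‖_‖ ^ 2),
    integral_exp_neg_mul_sq_norm_complex one_pos]
  field_simp

lemma complexGaussian_apply {s : Set ℂ} (hs : MeasurableSet s) :
    complexGaussian s = ENNReal.ofReal (∫ a in s, complexGaussianPDF a) := by
  rw [complexGaussian, withDensity_apply _ hs, ofReal_integral_eq_lintegral_ofReal
    (Integrable.of_integral_ne_zero (by simp [integral_complexGaussianPDF])).integrableOn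
    (ae_of_all _ complexGaussianPDF_nonneg)]

instance : NullSingletonClass complexGaussian := by
  unfold complexGaussian; infer_instance

instance : IsProbabilityMeasure complexGaussian :=
  ⟨by rw [complexGaussian_apply .univ, Measure.restrict_univ, integral_complexGaussianPDF,
    ENNReal.ofReal_one]⟩

lemma integral_complexGaussian (f : ℂ → ℝ) :
    ∫ a, f a ∂complexGaussian = ∫ a, complexGaussianPDF a * f a := by
  rw [complexGaussian, integral_withDensity_eq_integral_toReal_smul (by fun_prop)
    (ae_of_all _ fun _ => ENNReal.ofReal_lt_top)]
  simp [complexGaussianPDF_nonneg]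

lemma integral_exp_neg_mul_sq_norm_complexGaussian {b : ℝ} (hb : 0 ≤ b) :
    ∫ a, rexp (-b * ‖a‖ ^ 2) ∂complexGaussian = (1 + b)⁻¹ := by
  have h (a : ℂ) : complexGaussianPDF a * rexp (-b * ‖a‖ ^ 2)
      = π⁻¹ * rexp (-(1 + b) * ‖a‖ ^ 2) := by
    rw [complexGaussianPDF, mul_assoc, ← Real.exp_add]; ring_nf
  simp_rw [integral_complexGaussian, h, integral_const_mul,
    integral_exp_neg_mul_sq_norm_complex (by positivity : 0 < 1 + b)]
  field_simp

lemma integral_mul_exp_neg_sq (r : ℝ) :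
    ∫ y in (0 : ℝ)..r, y * rexp (-y ^ 2) = (1 - rexp (-r ^ 2)) / 2 := by
  have hF : (fun y : ℝ => -rexp (-y ^ 2) / 2) = fun y => rexp (-1 * y ^ 2) / -2 := by
    funext y; ring_nf
  have hderiv (y : ℝ) : HasDerivAt (fun y => -rexp (-y ^ 2) / 2) (y * rexp (-y ^ 2)) y := by
    rw [hF]
    exact (((hasDerivAt_pow 2 y).const_mul (-1)).exp.div_const (-2)).congr_deriv
      (by push_cast; ring_nf)
  rw [intervalIntegral.integral_eq_sub_of_hasDerivAt (fun y _ => hderiv y)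
    (by apply Continuous.intervalIntegrable; fun_prop)]
  simp
  ring

lemma integral_exp_neg_sq_norm_ball {r : ℝ} (hr : 0 ≤ r) :
    ∫ a in Metric.ball (0 : ℂ) r, rexp (-‖a‖ ^ 2) = π * (1 - rexp (-r ^ 2)) := by
  calc ∫ a in Metric.ball (0 : ℂ) r, rexp (-‖a‖ ^ 2)
      = ∫ a : ℂ, (Set.Iio r).indicator (fun y => rexp (-y ^ 2)) ‖a‖ := by
        rw [← integral_indicator measurableSet_ball]
        congr 1; ext a
        simp [Set.indicator]
    _ = 2 * π * ∫ y in Set.Ioc 0 r, y * rexp (-y ^ 2) := by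
        have hrad : ∫ y in Set.Ioi (0 : ℝ),
              y ^ 1 • (Set.Iio r).indicator (fun y => rexp (-y ^ 2)) y
            = ∫ y in Set.Ioc 0 r, y * rexp (-y ^ 2) := by
          rw [integral_Ioc_eq_integral_Ioo, ← Set.Ioi_inter_Iio,
            ← setIntegral_indicator measurableSet_Iio]
          congr 1 with y
          rw [pow_one, smul_eq_mul, Set.indicator_mul_right]
        rw [integral_fun_norm_addHaar volume, Complex.finrank_real_complex, hrad, measureReal_def,
          Complex.volume_ball]
        simp
        ring
    _ = π * (1 - rexp (-r ^ 2)) := by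
        rw [← intervalIntegral.integral_of_le hr, integral_mul_exp_neg_sq]
        ring

lemma complexGaussian_ball {r : ℝ} (hr : 0 ≤ r) :
    complexGaussian (Metric.ball 0 r) = ENNReal.ofReal (1 - rexp (-r ^ 2)) := by
  rw [complexGaussian_apply measurableSet_ball]
  simp_rw [complexGaussianPDF]
  rw [integral_const_mul, integral_exp_neg_sq_norm_ball hr, ← mul_assoc,
    inv_mul_cancel₀ pi_ne_zero, one_mul]

noncomputable abbrev complexGaussianPi (d : ℕ) : Measure (Fin d → ℂ) :=
  Measure.pi fun _ => complexGaussian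

lemma prod_complexGaussianPDF (z : Fin d → ℂ) :
    ∏ k, complexGaussianPDF (z k) = π⁻¹ ^ d * rexp (-sqNorm z) := by
  simp [complexGaussianPDF, Finset.prod_mul_distrib, ← Real.exp_sum, sqNorm]

lemma complexGaussianPi_eq_withDensity : complexGaussianPi d
    = volume.withDensity fun z => ENNReal.ofReal (π⁻¹ ^ d * rexp (-sqNorm z)) := by
  refine (Measure.pi_eq fun s hs => ?_)
  simp_rw [← prod_complexGaussianPDF,
    ENNReal.ofReal_prod_of_nonneg fun k _ => complexGaussianPDF_nonneg _]
  rw [withDensity_apply _ (.univ_pi hs), volume_pi, Measure.restrict_pi_pi,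
    lintegral_fin_pi_prod (f := fun _ a => ENNReal.ofReal (complexGaussianPDF a)) _
      fun _ => by fun_prop]
  simp [complexGaussian, withDensity_apply _ (hs _)]

lemma isUnitarilyInvariant_complexGaussianPi : IsUnitarilyInvariant (complexGaussianPi d) := by
  rw [complexGaussianPi_eq_withDensity]
  exact isUnitarilyInvariant_volume.withDensity (by fun_prop) fun U hU z => by
    rw [sqNorm_mulVec hU]

lemma integral_exp_neg_mul_sqNorm_complexGaussianPi {b : ℝ} (hb : 0 ≤ b) :
    ∫ z, rexp (-b * sqNorm z) ∂complexGaussianPi d = (1 + b)⁻¹ ^ d := by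
  have h (z : Fin d → ℂ) : rexp (-b * sqNorm z) = ∏ k, rexp (-b * ‖z k‖ ^ 2) := by
    rw [← Real.exp_sum, sqNorm, Finset.mul_sum]
  simp_rw [h]
  rw [complexGaussianPi, integral_fintype_prod_eq_pow fun a : ℂ => rexp (-b * ‖a‖ ^ 2),
    integral_exp_neg_mul_sq_norm_complexGaussian hb, Fintype.card_fin]

lemma complexGaussian_prod_norm_lt_sqrt {b : ℝ} (hb : 0 ≤ b) (m : ℕ) :
    (complexGaussian.prod (complexGaussianPi m)) {p | ‖p.1‖ < √(b * sqNorm p.2)}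
      = ENNReal.ofReal (1 - (1 + b)⁻¹ ^ m) := by
  have hexp_le (y : Fin m → ℂ) : rexp (-b * sqNorm y) ≤ 1 :=
    Real.exp_le_one_iff.2 (by nlinarith [sqNorm_nonneg y])
  have hint : Integrable (fun y => rexp (-b * sqNorm y)) (complexGaussianPi m) :=
    .of_integral_ne_zero (by rw [integral_exp_neg_mul_sqNorm_complexGaussianPi hb]; positivity)
  rw [Measure.prod_apply_symm (measurableSet_lt (by fun_prop) (by fun_prop))]
  calc ∫⁻ y, complexGaussian ((fun a => (a, y)) ⁻¹' {p | ‖p.1‖ < √(b * sqNorm p.2)})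
          ∂complexGaussianPi m
      = ∫⁻ y, ENNReal.ofReal (1 - rexp (-b * sqNorm y)) ∂complexGaussianPi m := by
        congr 1 with y
        have hball : (fun a => (a, y)) ⁻¹' {p : ℂ × (Fin m → ℂ) | ‖p.1‖ < √(b * sqNorm p.2)}
            = Metric.ball 0 √(b * sqNorm y) := by
          ext a; simp
        rw [hball, complexGaussian_ball (Real.sqrt_nonneg _),
          Real.sq_sqrt (mul_nonneg hb (sqNorm_nonneg y)), neg_mul]
    _ = ENNReal.ofReal (1 - (1 + b)⁻¹ ^ m) := by
        rw [← ofReal_integral_eq_lintegral_ofReal (f := fun y => 1 - rexp (-b * sqNorm y))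
          ((integrable_const 1).sub hint)
          (ae_of_all _ fun y => sub_nonneg.2 (hexp_le y)), integral_sub (integrable_const 1) hint,
          integral_exp_neg_mul_sqNorm_complexGaussianPi hb]
        simp

lemma lt_mul_sqrt_sq_add_iff {C x S : ℝ} (hC0 : 0 ≤ C) (hC1 : C < 1) (hx : 0 ≤ x) :
    x < C * √(x ^ 2 + S) ↔ x < √(C ^ 2 / (1 - C ^ 2) * S) := by
  have h1C : 0 < 1 - C ^ 2 := by nlinarith
  have hsqrt : C * √(x ^ 2 + S) = √(C ^ 2 * (x ^ 2 + S)) := by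
    rw [Real.sqrt_mul (sq_nonneg C), Real.sqrt_sq hC0]
  rw [hsqrt, Real.lt_sqrt hx, Real.lt_sqrt hx, div_mul_eq_mul_div, lt_div_iff₀ h1C]
  constructor <;> intro h <;> nlinarith

lemma complexGaussianPi_norm_apply_lt {C : ℝ} (hC0 : 0 ≤ C) (hC1 : C < 1) (m : ℕ) :
    complexGaussianPi (m + 1) {z | ‖z 0‖ < C * √(sqNorm z)}
      = ENNReal.ofReal (1 - (1 - C ^ 2) ^ m) := by
  have h1C : 0 < 1 - C ^ 2 := by nlinarith
  set b := C ^ 2 / (1 - C ^ 2)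
  have hb : 0 ≤ b := by positivity
  have hinv : (1 + b)⁻¹ = 1 - C ^ 2 := by
    rw [inv_eq_iff_eq_inv]
    simp only [b]
    field_simp
    ring
  have hmp := measurePreserving_piFinSuccAbove (fun _ : Fin (m + 1) => complexGaussian) 0
  have hset : {z : Fin (m + 1) → ℂ | ‖z 0‖ < C * √(sqNorm z)}
      = MeasurableEquiv.piFinSuccAbove (fun _ => ℂ) 0 ⁻¹' {p | ‖p.1‖ < √(b * sqNorm p.2)} := by
    ext z
    have hsplit : sqNorm z
        = ‖z 0‖ ^ 2 + sqNorm (MeasurableEquiv.piFinSuccAbove (fun _ => ℂ) 0 z).2 :=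
      Fin.sum_univ_succAbove _ 0
    change ‖z 0‖ < C * √(sqNorm z)
      ↔ ‖z 0‖ < √(b * sqNorm (MeasurableEquiv.piFinSuccAbove (fun _ => ℂ) 0 z).2)
    rw [hsplit]
    exact lt_mul_sqrt_sq_add_iff hC0 hC1 (norm_nonneg _)
  rw [hset,
    hmp.measure_preimage (measurableSet_lt (by fun_prop) (by fun_prop)).nullMeasurableSet,
    complexGaussian_prod_norm_lt_sqrt hb, hinv]

theorem IsUnitarilyInvariant.measure_norm_dotProduct_lt_le {P : Measure (Fin d → ℂ)}
    [IsProbabilityMeasure P] (hP : IsUnitarilyInvariant P) (hsphere : ∀ᵐ μ ∂P, sqNorm μ = 1)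
    (hd : 2 ≤ d) {v : Fin d → ℂ} (hv : v ≠ 0) (C : ℝ) :
    P {μ | ‖star μ ⬝ᵥ v‖ < C * √(sqNorm v)} ≤ ENNReal.ofReal ((d - 1) * C ^ 2) := by
  obtain ⟨m, rfl⟩ : ∃ m, d = m + 1 := ⟨d - 1, by omega⟩
  rw [hP.measure_norm_dotProduct_lt hv 0 C]
  rcases lt_or_ge C 0 with hC0 | hC0
  · have hempty : {μ : Fin (m + 1) → ℂ | ‖μ 0‖ < C} = ∅ :=
      Set.eq_empty_of_forall_notMem fun μ hμ => (norm_nonneg (μ 0)).not_gt (hμ.trans hC0)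
    simp [hempty]
  rcases lt_or_ge C 1 with hC1 | hC1
  · rw [hP.measure_norm_apply_lt_eq hsphere isUnitarilyInvariant_complexGaussianPi
      (measure_singleton 0), complexGaussianPi_norm_apply_lt hC0 hC1]
    gcongr
    have hbernoulli := one_add_mul_le_pow (a := -C ^ 2) (by nlinarith) m
    rw [← sub_eq_add_neg] at hbernoulli
    push_cast
    linarith
  · refine prob_le_one.trans ?_
    rw [← ENNReal.ofReal_one]
    gcongr
    have hm : (1 : ℝ) ≤ m := by exact_mod_cast (by omega : 1 ≤ m)
    push_cast
    nlinarith

end ComplexSphere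

theorem stmt_16_general (d n p : ℕ) (hd : 2 ≤ d)
    (P : Measure (Fin d → ℂ)) [IsProbabilityMeasure P]
    (hsphere : ∀ᵐ x ∂P, ∑ k, ‖x k‖ ^ 2 = 1)
    (hrot : ∀ U ∈ Matrix.unitaryGroup (Fin d) ℂ, P.map (fun x => U *ᵥ x) = P)
    (L : Fin n → Fin d → ℂ) (l : Fin d → ℂ)
    (hmult : (Finset.univ.filter (fun i : Fin n => L i = l)).card = p)
    (C : ℝ) :
    ENNReal.ofReal (1 - (n - p : ℝ) * ((d : ℝ) - 1) * C ^ 2) ≤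
      P {μ | ∀ j : Fin n, L j ≠ l →
        C * Real.sqrt (∑ k, ‖L j k - l k‖ ^ 2) ≤
          ‖∑ k, starRingEnd ℂ (μ k) * (L j k - l k)‖} := by
  set S := Finset.univ.filter fun j : Fin n => L j ≠ l
  have hS : (S.card : ℝ) = n - p := by
    have := Finset.card_filter_add_card_filter_not (s := Finset.univ) (fun j : Fin n => L j = l)
    rw [hmult, Finset.card_univ, Fintype.card_fin] at this
    rw [eq_sub_iff_add_eq]
    exact_mod_cast (add_comm _ _).trans this
  have hbad : ∀ j ∈ S, P {μ : Fin d → ℂ | C * √(∑ k, ‖L j k - l k‖ ^ 2)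
      ≤ ‖∑ k, starRingEnd ℂ (μ k) * (L j k - l k)‖}ᶜ ≤ ENNReal.ofReal ((d - 1) * C ^ 2) := by
    intro j hj
    have hv : L j - l ≠ 0 := sub_ne_zero.2 (Finset.mem_filter.1 hj).2
    simp only [Set.compl_ofPred, not_le]
    exact ComplexSphere.IsUnitarilyInvariant.measure_norm_dotProduct_lt_le hrot hsphere hd hv C
  calc ENNReal.ofReal (1 - (n - p : ℝ) * ((d : ℝ) - 1) * C ^ 2)
      = 1 - S.card * ENNReal.ofReal ((d - 1) * C ^ 2) := by
        have hd1 : (0 : ℝ) ≤ (d - 1) * C ^ 2 := by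
          have : (2 : ℝ) ≤ d := by exact_mod_cast hd
          nlinarith [sq_nonneg C]
        rw [← hS, mul_assoc, ENNReal.ofReal_sub _ (mul_nonneg (Nat.cast_nonneg _) hd1),
          ENNReal.ofReal_one,
          ENNReal.ofReal_mul (Nat.cast_nonneg _), ENNReal.ofReal_natCast]
    _ ≤ P (⋂ j ∈ S, {μ | C * √(∑ k, ‖L j k - l k‖ ^ 2)
          ≤ ‖∑ k, starRingEnd ℂ (μ k) * (L j k - l k)‖}) :=
        one_sub_card_mul_le_measure_biInter P S _ hbad
    _ = _ := by
        congr 1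
        ext μ
        simp [S]

/-- Probabilistic lower bound on the eigenvalue gap quantity `d(μ)`: with `μ` uniform on the
complex unit sphere (modelled as a unitarily invariant probability measure concentrated on the
sphere), and `𝛌` appearing exactly `p` times among `𝛌^{(1)},…,𝛌^{(n)}`, for every
`C ∈ [0, 1/√(d−1)]` the probability that `|μ*(𝛌^{(j)} − 𝛌)| ≥ C‖𝛌^{(j)} − 𝛌‖₂` holds for all
`j` with `𝛌^{(j)} ≠ 𝛌` is at least `1 − (n−p)(d−1)C²`. -/
theorem stmt_16 (d n p : ℕ) (hd : 2 ≤ d)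
    (P : Measure (Fin d → ℂ)) [IsProbabilityMeasure P]
    (hsphere : ∀ᵐ x ∂P, ∑ k, ‖x k‖ ^ 2 = 1)
    (hrot : ∀ U ∈ Matrix.unitaryGroup (Fin d) ℂ, P.map (fun x => U *ᵥ x) = P)
    (L : Fin n → Fin d → ℂ) (l : Fin d → ℂ)
    (hmult : (Finset.univ.filter (fun i : Fin n => L i = l)).card = p)
    (C : ℝ) (hC0 : 0 ≤ C) (hC1 : C ≤ 1 / Real.sqrt (d - 1)) :
    ENNReal.ofReal (1 - (n - p : ℝ) * ((d : ℝ) - 1) * C ^ 2) ≤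
      P {μ | ∀ j : Fin n, L j ≠ l →
        C * Real.sqrt (∑ k, ‖L j k - l k‖ ^ 2) ≤
          ‖∑ k, starRingEnd ℂ (μ k) * (L j k - l k)‖} :=
  stmt_16_general d n p hd P hsphere hrot L l hmult C
end

section
/- Eigenvector matrix condition vs eigenvalue conditions: if X ∈ ℂ^{p×p} is an invertible eigenvector matrix of a diagonalizable G ∈ ℂ^{p×p} with columns of unit 2-norm, and κ(λᵢ) = ‖yᵢ‖₂ denotes the condition number of the i-th (simple) eigenvalue where Y = X⁻* has columns yᵢ, then κ₂(X)² ≤ p·(κ(λ₁)² + ⋯ + κ(λ_p)²), where κ₂(X) = ‖X‖₂‖X⁻¹‖₂. -/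
/-! The spectral norm is bounded by the Frobenius norm. Unit columns give `‖X‖_F² = p`, and since
the rows of `X⁻¹` are the `yᵢ*`, `‖X⁻¹‖_F² = κ(λ₁)² + ⋯ + κ(λ_p)²`. -/

open Matrix
open scoped Matrix.Norms.L2Operator

namespace Matrix

variable {𝕜 m n : Type*} [RCLike 𝕜] [Fintype m] [Fintype n] [DecidableEq n]

theorem l2_opNorm_le_sqrt_sum_norm_sq (A : Matrix m n 𝕜) :
    ‖A‖ ≤ √(∑ i, ∑ j, ‖A i j‖ ^ 2) := by
  rw [l2_opNorm_def]
  refine ContinuousLinearMap.opNorm_le_bound _ (Real.sqrt_nonneg _) fun x => ?_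
  rw [← Real.sqrt_sq (norm_nonneg x), ← Real.sqrt_mul (by positivity), EuclideanSpace.norm_eq]
  gcongr
  rw [Finset.sum_mul]
  gcongr with i
  -- Cauchy–Schwarz for row `i` of `A` against `x`
  calc ‖∑ j, A i j * x j‖ ^ 2 ≤ (∑ j, ‖A i j‖ * ‖x j‖) ^ 2 := by
        gcongr
        exact (norm_sum_le _ _).trans_eq (by simp only [norm_mul])
    _ ≤ (∑ j, ‖A i j‖ ^ 2) * ∑ j, ‖x j‖ ^ 2 := Finset.sum_mul_sq_le_sq_mul_sq _ _ _
    _ = (∑ j, ‖A i j‖ ^ 2) * ‖x‖ ^ 2 := by rw [EuclideanSpace.norm_sq_eq]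

theorem l2_opNorm_sq_le_sum_norm_sq (A : Matrix m n 𝕜) :
    ‖A‖ ^ 2 ≤ ∑ i, ∑ j, ‖A i j‖ ^ 2 :=
  (Real.le_sqrt (norm_nonneg _) (by positivity)).mp A.l2_opNorm_le_sqrt_sum_norm_sq

end Matrix

theorem stmt_18_general (p : ℕ) (X : Matrix (Fin p) (Fin p) ℂ)
    (hcols : ∀ j, ∑ i, ‖X i j‖ ^ 2 = 1) :
    (‖X‖ * ‖X⁻¹‖) ^ 2 ≤ (p : ℝ) * ∑ i, ∑ j, ‖X⁻¹ i j‖ ^ 2 := by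
  have hX : ‖X‖ ^ 2 ≤ p :=
    calc ‖X‖ ^ 2 ≤ ∑ i, ∑ j, ‖X i j‖ ^ 2 := X.l2_opNorm_sq_le_sum_norm_sq
      _ = p := by simp [Finset.sum_comm (γ := Fin p), hcols]
  rw [mul_pow]
  gcongr
  exact X⁻¹.l2_opNorm_sq_le_sum_norm_sq

/-- Eigenvector matrix condition number versus eigenvalue condition numbers: if `X` is an
invertible eigenvector matrix of a diagonalizable `G` (with distinct eigenvalues) whose columns
have unit 2-norm, and `κ(λᵢ) = ‖yᵢ‖₂` where `yᵢ*` is the `i`-th row of `X⁻¹`, then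
`κ₂(X)² ≤ p (κ(λ₁)² + ⋯ + κ(λ_p)²)`, where `κ₂(X) = ‖X‖₂‖X⁻¹‖₂`. -/
theorem stmt_18 (p : ℕ) (G X : Matrix (Fin p) (Fin p) ℂ) (hX : IsUnit X)
    (lam : Fin p → ℂ) (hdistinct : Function.Injective lam)
    (heig : G * X = X * Matrix.diagonal lam)
    (hcols : ∀ j, ∑ i, ‖X i j‖ ^ 2 = 1) :
    (‖X‖ * ‖X⁻¹‖) ^ 2 ≤ (p : ℝ) * ∑ i, ∑ j, ‖X⁻¹ i j‖ ^ 2 :=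
  stmt_18_general p X hcols
end
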